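/- arXiv:2405.11933 — 2 statements merged into one kernel-verified Lean document; each statement's English description precedes it below -/
import Mathlib

section
/- Let n ≥ 4 be an integer and let a be a complex root of the polynomial equation binom(a, n+2) + binom(n+3-a, n+2) = 0 (interpreting binomial coefficients as polynomials a(a-1)···(a-n-1)/(n+2)!). If n is odd, then a ∈ {2, 3, ..., n+1}. -/
noncomputable def cbinom (x : ℂ) (k : ℕ) : ℂ :=
  (∏ j ∈ Finset.range k, (x - j)) / (Nat.factorial k)

/-!
Substituting `j ↦ n + 1 - j` in the second product shows that it equals
`(-1)^(n+2) ∏_{i=2}^{n+3} (a - i)`, so for odd `n` both terms share the factor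
`∏_{i=2}^{n+1} (a - i)` and the equation becomes
`(n + 2) (2a - n - 3) ∏_{i=2}^{n+1} (a - i) = 0`.
The only root not among `2, …, n + 1` is then `a = (n + 3) / 2`, which for odd `n`
is again an integer in that range.
-/

open Finset

section ProdRange

variable {R : Type*} [CommRing R]

theorem prod_range_sub_reflect (x c : R) (k : ℕ) :
    ∏ j ∈ range k, (c + k - 1 - x - j) = (-1) ^ k * ∏ j ∈ range k, (x - (c + j)) := by
  rw [← prod_range_reflect, ← card_range k, ← prod_const, card_range, ← prod_mul_distrib]
  refine prod_congr rfl fun j hj => ?_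
  rw [mem_range] at hj
  rw [Nat.cast_sub (by omega), Nat.cast_sub (by omega)]
  push_cast
  ring

theorem prod_range_add_two_sub (x : R) (k : ℕ) :
    ∏ j ∈ range (k + 2), (x - j) = x * (x - 1) * ∏ j ∈ range k, (x - (2 + j)) := by
  rw [prod_range_succ', prod_range_succ']
  push_cast
  ring_nf

theorem prod_range_add_two_sub_two_add (x : R) (k : ℕ) :
    ∏ j ∈ range (k + 2), (x - (2 + j)) =
      (∏ j ∈ range k, (x - (2 + j))) * ((x - (k + 2)) * (x - (k + 3))) := by
  rw [prod_range_succ, prod_range_succ]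
  push_cast
  ring

end ProdRange

theorem factorial_mul_cbinom_add_cbinom_reflect {n : ℕ} (hodd : Odd n) (a : ℂ) :
    (n + 2).factorial * (cbinom a (n + 2) + cbinom ((n : ℂ) + 3 - a) (n + 2)) =
      (n + 2) * (2 * a - (n + 3)) * ∏ j ∈ range n, (a - (2 + j)) := by
  have hfac : ((n + 2).factorial : ℂ) ≠ 0 := by exact_mod_cast (n + 2).factorial_ne_zero
  have hreflect := prod_range_sub_reflect a 2 (n + 2)
  rw [show (2 : ℂ) + ((n + 2 : ℕ) : ℂ) - 1 = n + 3 by push_cast; ring,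
    (Odd.add_even hodd even_two).neg_one_pow] at hreflect
  unfold cbinom
  rw [← add_div, mul_div_cancel₀ _ hfac, hreflect, prod_range_add_two_sub,
    prod_range_add_two_sub_two_add]
  ring

theorem stmt_0_general (n : ℕ) (hodd : Odd n) (a : ℂ)
    (h : cbinom a (n + 2) + cbinom ((n : ℂ) + 3 - a) (n + 2) = 0) :
    ∃ m : ℕ, 2 ≤ m ∧ m ≤ n + 1 ∧ a = m := by
  have key := factorial_mul_cbinom_add_cbinom_reflect hodd a
  rw [h, mul_zero, eq_comm] at key
  rcases mul_eq_zero.1 key with hlin | hprod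
  · have hmid : 2 * a - (n + 3) = 0 :=
      (mul_eq_zero.1 hlin).resolve_left (by exact_mod_cast (n + 1).succ_ne_zero)
    obtain ⟨k, rfl⟩ := hodd
    refine ⟨k + 2, by omega, by omega, ?_⟩
    push_cast at hmid ⊢
    linear_combination hmid / 2
  · obtain ⟨j, hj, hja⟩ := prod_eq_zero_iff.1 hprod
    refine ⟨j + 2, by omega, by simp only [mem_range] at hj; omega, ?_⟩
    push_cast
    linear_combination hja

theorem stmt_0 (n : ℕ) (hn : 4 ≤ n) (hodd : Odd n) (a : ℂ)
    (h : cbinom a (n + 2) + cbinom ((n : ℂ) + 3 - a) (n + 2) = 0) :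
    ∃ m : ℕ, 2 ≤ m ∧ m ≤ n + 1 ∧ a = m :=
  stmt_0_general n hodd a h
end

section
/- Let n ≥ 4 be an integer and let a be a complex root of the polynomial equation binom(a-1, n+2) + binom(n+2-a, n+2) = 0 (interpreting binomial coefficients as polynomials). If n is even, then a ∈ {1, 2, ..., n+2}. -/
/-!
Reversing the order of the factors of the falling factorial gives the reflection
`binom(k - 1 - x, k) = (-1)^k binom(x, k)`. With `k = n + 2` even and `x = a - 1` the equation
becomes `2 binom(a - 1, n + 2) = 0`, whose roots are `a - 1 ∈ {0, …, n + 1}`.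
-/

open Finset

theorem prod_range_reflect_sub {R : Type*} [CommRing R] (x : R) (k : ℕ) :
    ∏ j ∈ range k, ((k : R) - 1 - x - j) = (-1) ^ k * ∏ j ∈ range k, (x - j) := by
  rw [← prod_range_reflect, ← card_range k, ← prod_const, card_range, ← prod_mul_distrib]
  refine prod_congr rfl fun j hj => ?_
  obtain ⟨i, rfl⟩ : ∃ i, k = i + j + 1 := ⟨k - 1 - j, by grind⟩
  rw [show i + j + 1 - 1 - j = i by omega]
  push_cast
  ring

theorem cbinom_reflect (x : ℂ) (k : ℕ) : cbinom ((k : ℂ) - 1 - x) k = (-1) ^ k * cbinom x k := by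
  rw [cbinom, cbinom, prod_range_reflect_sub, mul_div_assoc]

theorem cbinom_eq_zero_iff {x : ℂ} {k : ℕ} : cbinom x k = 0 ↔ ∃ j < k, x = j := by
  simp [cbinom, Nat.factorial_ne_zero, prod_eq_zero_iff, sub_eq_zero]

theorem stmt_1_general (n : ℕ) (heven : Even n) (a : ℂ)
    (h : cbinom (a - 1) (n + 2) + cbinom ((n : ℂ) + 2 - a) (n + 2) = 0) :
    ∃ m : ℕ, 1 ≤ m ∧ m ≤ n + 2 ∧ a = m := by
  have hreflect : cbinom ((n : ℂ) + 2 - a) (n + 2) = cbinom (a - 1) (n + 2) := by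
    have := cbinom_reflect (a - 1) (n + 2)
    rw [(heven.add even_two).neg_one_pow, one_mul] at this
    rw [← this]
    push_cast
    ring_nf
  have hzero : cbinom (a - 1) (n + 2) = 0 := by
    rw [hreflect, ← two_mul] at h
    exact (mul_eq_zero.mp h).resolve_left two_ne_zero
  obtain ⟨j, hj, hja⟩ := cbinom_eq_zero_iff.mp hzero
  exact ⟨j + 1, by omega, by omega, by push_cast; linear_combination hja⟩

theorem stmt_1 (n : ℕ) (hn : 4 ≤ n) (heven : Even n) (a : ℂ)
    (h : cbinom (a - 1) (n + 2) + cbinom ((n : ℂ) + 2 - a) (n + 2) = 0) :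
    ∃ m : ℕ, 1 ≤ m ∧ m ≤ n + 2 ∧ a = m :=
  stmt_1_general n heven a h
end
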